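/- For 0 < α < 1 define M(α) = exp( 2α · Σ_{k=0}^∞ 1/((2k+1)(2k+1−α)) ) and N(α) = (π/2)·exp(π·tan(πα/2)). Then lim_{α→1⁻} N(α)/M(α) = 2π. -/

import Mathlib

open Real Filter Topology Set

private lemma cot_bnd {x : ℝ} (hx : 0 < x) (hx1 : x ≤ 1) :
    0 ≤ 1/x - Real.cos x / Real.sin x ∧ 1/x - Real.cos x / Real.sin x ≤ 2/3 * x := by
  have hpi := Real.pi_gt_three
  have hsin : 0 < Real.sin x := Real.sin_pos_of_pos_of_lt_pi hx (by linarith)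
  have hcos : 0 < Real.cos x := Real.cos_pos_of_mem_Ioo ⟨by linarith, by linarith⟩
  have htan : x < Real.tan x := Real.lt_tan hx (by linarith)
  rw [Real.tan_eq_sin_div_cos] at htan
  have hxc : x * Real.cos x < Real.sin x := (lt_div_iff₀ hcos).mp htan
  constructor
  · rw [sub_nonneg, div_le_div_iff₀ hsin hx]
    nlinarith
  · have heq : 1/x - Real.cos x / Real.sin x
        = (Real.sin x - x * Real.cos x) / (x * Real.sin x) := by
      field_simp
    rw [heq]
    have h1 : Real.sin x - x * Real.cos x ≤ x^3/2 := by
      nlinarith [Real.sin_le hx.le, Real.one_sub_sq_div_two_le_cos (x := x)]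
    have h2 : 3/4 * x^2 ≤ x * Real.sin x := by
      nlinarith [Real.sin_gt_sub_cube hx]
    calc (Real.sin x - x * Real.cos x) / (x * Real.sin x)
        ≤ (x^3/2) / (3/4 * x^2) := by
          apply div_le_div₀ (by positivity) h1 (by positivity) h2
      _ = 2/3 * x := by field_simp; ring

private lemma partial_sum_id (n : ℕ) :
    ∑ k ∈ Finset.range n, (1/(2*(k:ℝ)+2) - 1/(2*(k:ℝ)+3))
      = 1 + ((harmonic n : ℝ)) - (harmonic (2*n+1) : ℝ) := by
  induction n with
  | zero =>
      simp [harmonic_succ]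
  | succ n ih =>
      rw [Finset.sum_range_succ, ih]
      have e1 : ((harmonic (n+1) : ℚ) : ℝ) = (harmonic n : ℝ) + 1/((n:ℝ)+1) := by
        rw [harmonic_succ]; push_cast; ring
      have e2 : ((harmonic (2*(n+1)+1) : ℚ) : ℝ)
          = (harmonic (2*n+1) : ℝ) + 1/(2*(n:ℝ)+2) + 1/(2*(n:ℝ)+3) := by
        have h2 : 2*(n+1)+1 = (2*n+1) + 1 + 1 := by ring
        rw [h2, harmonic_succ, harmonic_succ]; push_cast; ring
      rw [e1, e2]
      have hn : (0:ℝ) < (n:ℝ) + 1 := by positivity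
      field_simp
      ring

private lemma hasSum_h : HasSum (fun k : ℕ => 1/(2*(k:ℝ)+2) - 1/(2*(k:ℝ)+3)) (1 - Real.log 2) := by
  have hB : Summable (fun k : ℕ => 1/((k:ℝ)+1)^2) := by
    have h0 : Summable (fun n : ℕ => 1/(n:ℝ)^2) := by
      rw [Real.summable_one_div_nat_pow]; norm_num
    have := (summable_nat_add_iff 1).mpr h0
    exact this.congr (by intro n; push_cast; ring)
  have hsum : Summable (fun k : ℕ => 1/(2*(k:ℝ)+2) - 1/(2*(k:ℝ)+3)) := by
    apply hB.of_nonneg_of_le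
    · intro k
      have h1 : (0:ℝ) < 2*(k:ℝ)+2 := by positivity
      have h2 : (0:ℝ) < 2*(k:ℝ)+3 := by positivity
      rw [sub_nonneg]
      gcongr <;> linarith
    · intro k
      have hk : (0:ℝ) ≤ (k:ℝ) := k.cast_nonneg
      have heq : 1/(2*(k:ℝ)+2) - 1/(2*(k:ℝ)+3) = 1/((2*(k:ℝ)+2)*(2*(k:ℝ)+3)) := by
        field_simp
        ring
      rw [heq, div_le_div_iff₀ (by positivity) (by positivity)]
      nlinarith
  rw [hsum.hasSum_iff_tendsto_nat]
  have key : Tendsto (fun n : ℕ => 1 + ((harmonic n : ℝ)) - (harmonic (2*n+1) : ℝ))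
      atTop (𝓝 (1 - Real.log 2)) := by
    have t1 : Tendsto (fun n : ℕ => (harmonic n : ℝ) - Real.log n) atTop
        (𝓝 eulerMascheroniConstant) := tendsto_harmonic_sub_log
    have hmono : Tendsto (fun n : ℕ => 2*n+1) atTop atTop :=
      tendsto_atTop_mono (fun n => by simp only [id_eq]; omega) tendsto_id
    have t2 : Tendsto (fun n : ℕ => (harmonic (2*n+1) : ℝ) - Real.log ((2*n+1 : ℕ) : ℝ)) atTop
        (𝓝 eulerMascheroniConstant) := t1.comp hmono
    have t3 : Tendsto (fun n : ℕ => Real.log (2 + 1/(n:ℝ))) atTop (𝓝 (Real.log 2)) := by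
      have h4 : Tendsto (fun n : ℕ => 2 + 1/(n:ℝ)) atTop (𝓝 2) := by
        simpa using (tendsto_one_div_atTop_nhds_zero_nat).const_add (2:ℝ)
      have := h4.log (by norm_num)
      simpa using this
    have comb := ((tendsto_const_nhds : Tendsto (fun _ : ℕ => (1:ℝ)) atTop (𝓝 1)).add t1).sub
      (t2.add t3)
    have heq : (1 : ℝ) + eulerMascheroniConstant - (eulerMascheroniConstant + Real.log 2)
        = 1 - Real.log 2 := by ring
    rw [heq] at comb
    apply comb.congr'
    filter_upwards [eventually_ge_atTop 1] with n hn
    have hn0 : (0:ℝ) < (n:ℝ) := by exact_mod_cast hn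
    have hlog : Real.log (2 + 1/(n:ℝ)) = Real.log ((2*n+1 : ℕ) : ℝ) - Real.log n := by
      rw [← Real.log_div (by positivity) hn0.ne']
      congr 1
      push_cast
      field_simp
    rw [hlog]
    push_cast
    ring
  apply key.congr
  intro n
  rw [partial_sum_id]


/-- Brannan–Kirwan's sharp bound `M(α) = exp(2α Σ_{k≥0} 1/((2k+1)(2k+1-α)))`. -/
noncomputable def Mbound (α : ℝ) : ℝ :=
  Real.exp (2 * α * ∑' k : ℕ, 1 / ((2 * (k : ℝ) + 1) * (2 * (k : ℝ) + 1 - α)))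

/-- The bound `N(α) = (π/2) exp(π tan(πα/2))`. -/
noncomputable def Nbound (α : ℝ) : ℝ :=
  Real.pi / 2 * Real.exp (Real.pi * Real.tan (Real.pi * α / 2))

/-- `N(α)/M(α) → 2π` as `α → 1⁻` within `(0,1)`. -/
theorem stmt7 :
    Filter.Tendsto (fun α : ℝ => Nbound α / Mbound α)
      (nhdsWithin 1 (Set.Ioo 0 1)) (nhds (2 * Real.pi)) := by
  have hB : Summable (fun k : ℕ => 1/((k:ℝ)+1)^2) := by
    have h0 : Summable (fun n : ℕ => 1/(n:ℝ)^2) := by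
      rw [Real.summable_one_div_nat_pow]; norm_num
    exact ((summable_nat_add_iff 1).mpr h0).congr (by intro n; push_cast; ring)
  have hpi := Real.pi_gt_three
  set 𝓕 := nhdsWithin (1:ℝ) (Set.Ioo 0 1) with h𝓕
  set A : ℝ → ℝ := fun α => π * Real.tan (π * α / 2) - 2/(1-α) with hA
  set f : ℝ → ℕ → ℝ := fun α k => 2/(2*(k:ℝ)+3-α) - 2/(2*(k:ℝ)+3) with hf
  set R : ℝ → ℝ := fun α => ∑' k, f α k with hR
  -- Part A : A → 0
  have tendA : Tendsto A 𝓕 (𝓝 0) := by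
    have hlo : Tendsto (fun α : ℝ => -(π^2/3) * (1-α)) 𝓕 (𝓝 0) := by
      have : Tendsto (fun α : ℝ => -(π^2/3) * (1-α)) (𝓝 1) (𝓝 (-(π^2/3) * (1-1))) :=
        (continuous_const.mul (continuous_const.sub continuous_id)).tendsto 1
      simpa using this.mono_left nhdsWithin_le_nhds
    have hev : ∀ᶠ α in 𝓕, -(π^2/3) * (1-α) ≤ A α ∧ A α ≤ 0 := by
      filter_upwards [eventually_mem_nhdsWithin,
        (eventually_gt_nhds (by norm_num : (1/2:ℝ) < 1)).filter_mono nhdsWithin_le_nhds]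
        with α hα hhalf
      obtain ⟨h0, h1⟩ := hα
      set x : ℝ := π * (1-α)/2 with hx
      have hx0 : 0 < x := by rw [hx]; exact div_pos (mul_pos (by linarith) (by linarith)) two_pos
      have hx1 : x ≤ 1 := by rw [hx]; nlinarith [Real.pi_lt_d2]
      obtain ⟨hb1, hb2⟩ := cot_bnd hx0 hx1
      have htan : Real.tan (π * α / 2) = Real.cos x / Real.sin x := by
        have : π * α / 2 = π/2 - x := by rw [hx]; ring
        rw [this, Real.tan_pi_div_two_sub, Real.tan_eq_sin_div_cos, inv_div]
      have hdiv : 2/(1-α) = π / x := by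
        rw [hx]
        rw [div_eq_div_iff (by linarith) (by positivity)]
        ring
      have hAeq : A α = -(π * (1/x - Real.cos x / Real.sin x)) := by
        simp only [hA, htan, hdiv]
        field_simp
        ring
      constructor
      · rw [hAeq]
        have hm : π*(1/x - Real.cos x / Real.sin x) ≤ π*(2/3*x) :=
          mul_le_mul_of_nonneg_left hb2 Real.pi_pos.le
        have hxx : π*(2/3*x) = π^2/3*(1-α) := by rw [hx]; ring
        linarith
      · rw [hAeq]
        exact neg_nonpos.mpr (mul_nonneg Real.pi_pos.le hb1)
    exact tendsto_of_tendsto_of_tendsto_of_le_of_le' hlo tendsto_const_nhds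
      (hev.mono fun α h => h.1) (hev.mono fun α h => h.2)
  -- Part B : R → 2 - 2 log 2
  have hsum_g : HasSum (fun k : ℕ => 2/(2*(k:ℝ)+2) - 2/(2*(k:ℝ)+3)) (2 - 2 * Real.log 2) := by
    have := hasSum_h.mul_left 2
    have heq : (fun k : ℕ => 2 * (1/(2*(k:ℝ)+2) - 1/(2*(k:ℝ)+3)))
        = fun k : ℕ => 2/(2*(k:ℝ)+2) - 2/(2*(k:ℝ)+3) := by
      funext k; ring
    rw [heq] at this
    rw [show (2:ℝ) - 2 * Real.log 2 = 2 * (1 - Real.log 2) by ring]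
    exact this
  have tendR : Tendsto R 𝓕 (𝓝 (2 - 2 * Real.log 2)) := by
    rw [← hsum_g.tsum_eq]
    apply tendsto_tsum_of_dominated_convergence (bound := fun k : ℕ => 1/((k:ℝ)+1)^2) hB
    · intro k
      have hk : (0:ℝ) ≤ (k:ℝ) := k.cast_nonneg
      have hne : 2*(k:ℝ)+3 - 1 ≠ 0 := by intro h; linarith
      have hc : ContinuousAt (fun α : ℝ => 2/(2*(k:ℝ)+3-α) - 2/(2*(k:ℝ)+3)) 1 :=
        (continuousAt_const.div (continuousAt_const.sub continuousAt_id) hne).sub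
          continuousAt_const
      have := hc.tendsto.mono_left (nhdsWithin_le_nhds (s := Set.Ioo (0:ℝ) 1))
      have hval : 2/(2*(k:ℝ)+3-1) - 2/(2*(k:ℝ)+3) = 2/(2*(k:ℝ)+2) - 2/(2*(k:ℝ)+3) := by
        rw [show 2*(k:ℝ)+3-1 = 2*(k:ℝ)+2 from by ring]
      rw [hval] at this
      exact this
    · filter_upwards [eventually_mem_nhdsWithin] with α hα k
      obtain ⟨h0, h1⟩ := hα
      have hk : (0:ℝ) ≤ (k:ℝ) := k.cast_nonneg
      have hd1 : (0:ℝ) < 2*(k:ℝ)+3-α := by linarith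
      have hd2 : (0:ℝ) < 2*(k:ℝ)+3 := by linarith
      have heq : f α k = 2*α/((2*(k:ℝ)+3-α)*(2*(k:ℝ)+3)) := by
        simp only [hf]
        field_simp
        ring
      rw [Real.norm_eq_abs, heq, abs_of_nonneg (by positivity),
        div_le_div_iff₀ (by positivity) (by positivity)]
      nlinarith
  -- Exponent identity
  have hexp : ∀ᶠ α in 𝓕, Nbound α / Mbound α = π/2 * Real.exp (A α + 2 - R α) := by
    filter_upwards [eventually_mem_nhdsWithin] with α hα
    obtain ⟨h0, h1⟩ := hα
    set v : ℕ → ℝ := fun k => 2*α/((2*(k:ℝ)+1)*(2*(k:ℝ)+1-α)) with hv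
    have hsv : Summable v := by
      apply Summable.of_nonneg_of_le ?_ ?_ (hB.mul_left (2/(1-α)))
      · intro k
        have hk : (0:ℝ) ≤ (k:ℝ) := k.cast_nonneg
        have : (0:ℝ) < 2*(k:ℝ)+1-α := by linarith
        positivity
      · intro k
        have hk : (0:ℝ) ≤ (k:ℝ) := k.cast_nonneg
        have hd : (0:ℝ) < 2*(k:ℝ)+1-α := by linarith
        have h1α : (0:ℝ) < 1 - α := by linarith
        have key : (1-α)*((k:ℝ)+1)^2 ≤ (2*(k:ℝ)+1)*(2*(k:ℝ)+1-α) := by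
          nlinarith [mul_nonneg hk hk, mul_nonneg (mul_nonneg hk hk) h0.le]
        have hY : (0:ℝ) ≤ (2*(k:ℝ)+1)*(2*(k:ℝ)+1-α) :=
          mul_nonneg (by linarith) hd.le
        have hrw : 2/(1-α) * (1/((k:ℝ)+1)^2) = 2/((1-α)*((k:ℝ)+1)^2) := by
          rw [div_mul_div_comm, mul_one]
        rw [hv, hrw, div_le_div_iff₀ (by positivity) (by positivity)]
        calc 2*α*((1-α)*((k:ℝ)+1)^2)
            ≤ 2*α*((2*(k:ℝ)+1)*(2*(k:ℝ)+1-α)) :=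
              mul_le_mul_of_nonneg_left key (by linarith)
          _ ≤ 2*((2*(k:ℝ)+1)*(2*(k:ℝ)+1-α)) := by nlinarith [mul_nonneg hY h1α.le]
    have hsum_eq : 2 * α * (∑' k : ℕ, 1 / ((2 * (k : ℝ) + 1) * (2 * (k : ℝ) + 1 - α)))
        = 2/(1-α) - 2 + R α := by
      have e1 : 2 * α * (∑' k : ℕ, 1 / ((2 * (k : ℝ) + 1) * (2 * (k : ℝ) + 1 - α)))
          = ∑' k, v k := by
        rw [← tsum_mul_left]
        apply tsum_congr
        intro k
        rw [hv, mul_one_div]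
      have e2 : ∑' k, v k = v 0 + ∑' k, v (k+1) := hsv.tsum_eq_zero_add
      have e3 : v 0 = 2/(1-α) - 2 := by
        have h1α : (1:ℝ) - α ≠ 0 := by intro h; linarith
        simp only [hv]
        push_cast
        field_simp
        ring_nf
        field_simp
      have e4 : (∑' k, v (k+1)) = R α := by
        apply tsum_congr
        intro k
        have hk : (0:ℝ) ≤ (k:ℝ) := k.cast_nonneg
        have hd1 : (0:ℝ) < 2*(k:ℝ)+3-α := by linarith
        have hd2 : (0:ℝ) < 2*(k:ℝ)+3 := by linarith
        simp only [hv, hf]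
        push_cast
        rw [show 2*((k:ℝ)+1)+1 = 2*(k:ℝ)+3 from by ring]
        have ne1 := hd1.ne'
        have ne2 := hd2.ne'
        rw [eq_sub_iff_add_eq]
        field_simp
        ring
      rw [e1, e2, e3, e4]
    rw [Nbound, Mbound, hsum_eq, mul_div_assoc, ← Real.exp_sub]
    congr 2
    simp only [hA]
    ring
  -- Assemble
  have hval : π/2 * Real.exp (0 + 2 - (2 - 2 * Real.log 2)) = 2 * π := by
    rw [show (0:ℝ) + 2 - (2 - 2 * Real.log 2) = Real.log 2 + Real.log 2 by ring,
      Real.exp_add, Real.exp_log two_pos]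
    ring
  have tendG : Tendsto (fun α => π/2 * Real.exp (A α + 2 - R α)) 𝓕 (𝓝 (2*π)) := by
    rw [← hval]
    exact (((Real.continuous_exp.tendsto _).comp ((tendA.add_const 2).sub tendR)).const_mul _)
  exact tendG.congr' (hexp.mono fun α h => h.symm)
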